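/- arXiv:0907.0771 — 2 statements merged into one kernel-verified Lean document; each statement's English description precedes it below -/
import Mathlib

section
/- Suppose x is odd, q is an odd prime, r is prime, p is prime, gcd(x, y) = 1, and x^4 - q^4 = p·y^r with p ∤ y and q ∤ x. Then either (x² - q² = 2^(r-1)·p·y₁^r and x² + q² = 2·y₂^r) or (x² - q² = 2^(r-1)·y₁^r and x² + q² = 2·p·y₂^r) for some integers y₁, y₂ with 2·y₁·y₂ = y, y₂ odd, and gcd(y₁, y₂) = 1. -/
set_option maxHeartbeats 1000000 in
theorem stmt_8 (p q r : ℕ) (hp : p.Prime) (hq : q.Prime) (hr : r.Prime)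
    (hq2 : q ≠ 2) (hrodd : r ≠ 2) (hpq : p ≠ q) (hqr : q ≠ r) (hpr : p ≠ r)
    (x y : ℤ) (hx : Odd x) (hy0 : y ≠ 0) (hxy : IsCoprime x y)
    (heq : x ^ 4 - (q : ℤ) ^ 4 = (p : ℤ) * y ^ r)
    (hpy : ¬ (p : ℤ) ∣ y) (hqx : ¬ (q : ℤ) ∣ x) :
    ∃ y₁ y₂ : ℤ, 2 * y₁ * y₂ = y ∧ Odd y₂ ∧ IsCoprime y₁ y₂ ∧
      ((x ^ 2 - (q : ℤ) ^ 2 = 2 ^ (r - 1) * (p : ℤ) * y₁ ^ r ∧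
        x ^ 2 + (q : ℤ) ^ 2 = 2 * y₂ ^ r) ∨
       (x ^ 2 - (q : ℤ) ^ 2 = 2 ^ (r - 1) * y₁ ^ r ∧
        x ^ 2 + (q : ℤ) ^ 2 = 2 * (p : ℤ) * y₂ ^ r)) := by
  have h2 : Prime (2 : ℤ) := Int.prime_two
  have hrodd' : Odd r := hr.odd_of_ne_two hrodd
  have hr1 : 1 ≤ r := hr.one_lt.le
  have hrpos : 0 < r := hr.pos
  have hqodd : Odd ((q : ℤ)) := (Int.odd_coe_nat q).mpr (hq.odd_of_ne_two hq2)
  obtain ⟨a, rfl⟩ := hx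
  obtain ⟨b, hb⟩ := hqodd
  have hppr : Prime ((p : ℤ)) := Nat.prime_iff_prime_int.mp hp
  have h4 : (4 : ℤ) ∣ (p : ℤ) * y ^ r := by
    rw [← heq, hb]
    exact ⟨4 * ((a^2+a)^2 - (b^2+b)^2) + 2 * ((a^2+a) - (b^2+b)), by ring⟩
  have hp2 : p ≠ 2 := by
    rintro rfl
    push_cast at h4 hpy
    have h2y : (2 : ℤ) ∣ y ^ r := by
      obtain ⟨c, hc⟩ := h4
      exact ⟨c, by linarith⟩
    exact hpy (h2.dvd_of_dvd_pow h2y)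
  have hpodd : Odd ((p : ℤ)) := (Int.odd_coe_nat p).mpr (hp.odd_of_ne_two hp2)
  have hyeven : (2 : ℤ) ∣ y := by
    refine h2.dvd_of_dvd_pow (a := y) (n := r) ?_
    have h2d : (2 : ℤ) ∣ (p : ℤ) * y ^ r := dvd_trans ⟨2, by norm_num⟩ h4
    rcases h2.dvd_mul.mp h2d with h | h
    · exact ((Int.not_odd_iff_even.mpr (even_iff_two_dvd.mpr h)) hpodd).elim
    · exact h
  obtain ⟨k, m, hm2, hym⟩ := Nat.exists_eq_pow_mul_and_not_dvd (Int.natAbs_ne_zero.mpr hy0) 2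
    (by norm_num)
  have hmodd : Odd ((m : ℤ)) := by
    have : Odd m := Nat.odd_iff.mpr (by omega)
    exact_mod_cast this
  obtain ⟨w, hw, hwodd⟩ : ∃ w : ℤ, y = 2 ^ k * w ∧ Odd w := by
    rcases Int.natAbs_eq y with h | h
    · exact ⟨(m : ℤ), by rw [h, hym]; push_cast; ring, hmodd⟩
    · exact ⟨-(m : ℤ), by rw [h, hym]; push_cast; ring, hmodd.neg⟩
  have hk1 : 1 ≤ k := by
    by_contra hk
    have hk0 : k = 0 := by omega
    rw [hk0, pow_zero, one_mul] at hw
    rw [hw] at hyeven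
    exact (Int.not_odd_iff_even.mpr (even_iff_two_dvd.mpr hyeven)) hwodd
  set B : ℤ := 2 * (a ^ 2 + a + b ^ 2 + b) + 1 with hBdef
  have hBodd : Odd B := ⟨a ^ 2 + a + b ^ 2 + b, rfl⟩
  have hB : (2 * a + 1) ^ 2 + (q : ℤ) ^ 2 = 2 * B := by rw [hb]; ring
  clear_value B
  have hmain : ((2 * a + 1) ^ 2 - (q : ℤ) ^ 2) * B = (p : ℤ) * 2 ^ (r * k - 1) * w ^ r := by
    have h1 : 2 * (((2 * a + 1) ^ 2 - (q : ℤ) ^ 2) * B)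
        = 2 * ((p : ℤ) * 2 ^ (r * k - 1) * w ^ r) := by
      have e1 : ((2 * a + 1) ^ 2 - (q : ℤ) ^ 2) * (2 * B) = (p : ℤ) * (2 ^ k * w) ^ r := by
        rw [← hB, ← hw, ← heq]; ring
      have e2 : (2 : ℤ) ^ (k * r) = 2 * 2 ^ (r * k - 1) := by
        rw [← pow_succ']
        congr 1
        have h1 : 1 ≤ r * k := Nat.one_le_iff_ne_zero.mpr (Nat.mul_ne_zero (by omega) (by omega))
        rw [Nat.sub_add_cancel h1, mul_comm]
      calc 2 * (((2 * a + 1) ^ 2 - (q : ℤ) ^ 2) * B)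
          = ((2 * a + 1) ^ 2 - (q : ℤ) ^ 2) * (2 * B) := by ring
        _ = (p : ℤ) * (2 ^ (k * r) * w ^ r) := by rw [e1, mul_pow, ← pow_mul]
        _ = 2 * ((p : ℤ) * 2 ^ (r * k - 1) * w ^ r) := by rw [e2]; ring
    exact mul_left_cancel₀ two_ne_zero h1
  have hcop2B : IsCoprime (2 : ℤ) B := (h2.coprime_iff_not_dvd).mpr
    (fun h => (Int.not_odd_iff_even.mpr (even_iff_two_dvd.mpr h)) hBodd)
  have h2rkB : IsCoprime ((2 : ℤ) ^ (r * k - 1)) B := hcop2B.pow_left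
  have hdvd : ((2 : ℤ) ^ (r * k - 1)) ∣ ((2 * a + 1) ^ 2 - (q : ℤ) ^ 2) := by
    have hd : ((2 : ℤ) ^ (r * k - 1)) ∣ ((2 * a + 1) ^ 2 - (q : ℤ) ^ 2) * B :=
      ⟨(p : ℤ) * w ^ r, by rw [hmain]; ring⟩
    exact h2rkB.dvd_of_dvd_mul_right hd
  obtain ⟨u, hu⟩ := hdvd
  have h2rk0 : ((2 : ℤ) ^ (r * k - 1)) ≠ 0 := pow_ne_zero _ two_ne_zero
  have huB : u * B = (p : ℤ) * w ^ r := by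
    apply mul_left_cancel₀ h2rk0
    calc (2 : ℤ) ^ (r * k - 1) * (u * B) = ((2 * a + 1) ^ 2 - (q : ℤ) ^ 2) * B := by
          rw [hu]; ring
      _ = (p : ℤ) * 2 ^ (r * k - 1) * w ^ r := hmain
      _ = 2 ^ (r * k - 1) * ((p : ℤ) * w ^ r) := by ring
  have huodd : Odd u := by
    have h : Odd (u * B) := by rw [huB]; exact hpodd.mul hwodd.pow
    exact (Int.odd_mul.mp h).1
  have hqZ : Prime ((q : ℤ)) := Nat.prime_iff_prime_int.mp hq
  have hcopxq : IsCoprime ((q : ℤ)) (2 * a + 1) := (hqZ.coprime_iff_not_dvd).mpr hqx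
  have hcopsq : IsCoprime ((2 * a + 1) ^ 2) ((q : ℤ) ^ 2) := hcopxq.symm.pow
  have hcopuB : IsCoprime u B := by
    rw [← isRelPrime_iff_isCoprime]
    intro d hdu hdB
    have hd1 : d ∣ (2 * a + 1) ^ 2 - (q : ℤ) ^ 2 := hu ▸ Dvd.dvd.mul_left hdu _
    have hd2 : d ∣ (2 * a + 1) ^ 2 + (q : ℤ) ^ 2 := hB ▸ Dvd.dvd.mul_left hdB 2
    have hdx : d ∣ 2 * (2 * a + 1) ^ 2 := by
      have h := dvd_add hd2 hd1
      rwa [show ((2*a+1)^2 + (q:ℤ)^2) + ((2*a+1)^2 - (q:ℤ)^2) = 2 * (2*a+1)^2 by ring] at h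
    have hdq : d ∣ 2 * (q : ℤ) ^ 2 := by
      have h := dvd_sub hd2 hd1
      rwa [show ((2*a+1)^2 + (q:ℤ)^2) - ((2*a+1)^2 - (q:ℤ)^2) = 2 * (q:ℤ)^2 by ring] at h
    have hdodd : IsCoprime (2 : ℤ) d := (h2.coprime_iff_not_dvd).mpr
      (fun h => (Int.not_odd_iff_even.mpr (even_iff_two_dvd.mpr (h.trans hdu))) huodd)
    exact hcopsq.isUnit_of_dvd' (hdodd.symm.dvd_of_dvd_mul_left hdx)
      (hdodd.symm.dvd_of_dvd_mul_left hdq)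
  have hexp : ((2 : ℤ) ^ (r * k - 1)) = 2 ^ (r - 1) * (2 ^ (k - 1)) ^ r := by
    rw [← pow_mul, ← pow_add]
    congr 1
    obtain ⟨r', rfl⟩ : ∃ r', r = r' + 1 := ⟨r - 1, by omega⟩
    obtain ⟨k', rfl⟩ : ∃ k', k = k' + 1 := ⟨k - 1, by omega⟩
    simp only [Nat.add_sub_cancel]
    rw [show (r' + 1) * (k' + 1) = (r' + k' * (r' + 1)) + 1 by ring, Nat.add_sub_cancel]
  have hpuB : (p : ℤ) ∣ u * B := huB ▸ ⟨w ^ r, rfl⟩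
  rcases hppr.dvd_mul.mp hpuB with hpu | hpB
  · -- p ∣ u : first alternative
    obtain ⟨u₂, hu₂⟩ := hpu
    have hu₂B : u₂ * B = w ^ r := by
      apply mul_left_cancel₀ hppr.ne_zero
      rw [show (p:ℤ) * (u₂ * B) = (p * u₂) * B by ring, ← hu₂, huB]
    rw [hu₂] at hcopuB
    have hcop' : IsCoprime u₂ B := hcopuB.of_mul_left_right
    obtain ⟨c, hc⟩ := Int.eq_pow_of_mul_eq_pow_odd_left hcop' hrodd' hu₂B
    obtain ⟨d, hd⟩ := Int.eq_pow_of_mul_eq_pow_odd_right hcop' hrodd' hu₂B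
    have hcd : c * d = w := by
      have h : (c * d) ^ r = w ^ r := by rw [mul_pow, ← hc, ← hd, hu₂B]
      exact hrodd'.strictMono_pow.injective h
    have hdodd : Odd d := (Int.odd_pow' hr.pos.ne').mp (hd ▸ hBodd)
    have hcopcd : IsCoprime c d := by
      have h : IsCoprime (c ^ r) (d ^ r) := hc ▸ hd ▸ hcop'
      exact (IsCoprime.pow_left_iff hrpos).mp ((IsCoprime.pow_right_iff hrpos).mp h)
    refine ⟨2 ^ (k - 1) * c, d, ?_, hdodd, ?_, Or.inl ⟨?_, ?_⟩⟩
    · rw [hw, ← hcd]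
      rw [show 2 * (2 ^ (k - 1) * c) * d = (2 * 2 ^ (k - 1)) * (c * d) by ring, ← pow_succ']
      congr 2
      omega
    · refine IsCoprime.mul_left ?_ hcopcd
      exact IsCoprime.pow_left ((h2.coprime_iff_not_dvd).mpr
        (fun h => (Int.not_odd_iff_even.mpr (even_iff_two_dvd.mpr h)) hdodd))
    · rw [hu, hu₂, hc, hexp, mul_pow]; ring
    · rw [hB, hd]
  · -- p ∣ B : second alternative
    obtain ⟨B₂, hB₂⟩ := hpB
    have huB₂ : u * B₂ = w ^ r := by
      apply mul_left_cancel₀ hppr.ne_zero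
      rw [show (p:ℤ) * (u * B₂) = u * (p * B₂) by ring, ← hB₂, huB]
    rw [hB₂] at hcopuB
    have hcop' : IsCoprime u B₂ := hcopuB.of_mul_right_right
    obtain ⟨c, hc⟩ := Int.eq_pow_of_mul_eq_pow_odd_left hcop' hrodd' huB₂
    obtain ⟨d, hd⟩ := Int.eq_pow_of_mul_eq_pow_odd_right hcop' hrodd' huB₂
    have hcd : c * d = w := by
      have h : (c * d) ^ r = w ^ r := by rw [mul_pow, ← hc, ← hd, huB₂]
      exact hrodd'.strictMono_pow.injective h
    have hB₂odd : Odd B₂ := by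
      have h : Odd ((p : ℤ) * B₂) := hB₂ ▸ hBodd
      exact (Int.odd_mul.mp h).2
    have hdodd : Odd d := (Int.odd_pow' hr.pos.ne').mp (hd ▸ hB₂odd)
    have hcopcd : IsCoprime c d := by
      have h : IsCoprime (c ^ r) (d ^ r) := hc ▸ hd ▸ hcop'
      exact (IsCoprime.pow_left_iff hrpos).mp ((IsCoprime.pow_right_iff hrpos).mp h)
    refine ⟨2 ^ (k - 1) * c, d, ?_, hdodd, ?_, Or.inr ⟨?_, ?_⟩⟩
    · rw [hw, ← hcd]
      rw [show 2 * (2 ^ (k - 1) * c) * d = (2 * 2 ^ (k - 1)) * (c * d) by ring, ← pow_succ']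
      congr 2
      omega
    · refine IsCoprime.mul_left ?_ hcopcd
      exact IsCoprime.pow_left ((h2.coprime_iff_not_dvd).mpr
        (fun h => (Int.not_odd_iff_even.mpr (even_iff_two_dvd.mpr h)) hdodd))
    · rw [hu, hc, hexp, mul_pow]; ring
    · rw [hB, hB₂, hd]; ring
end

section
/- Let p and r be primes with p ≡ 1 (mod r), ζ a primitive r-th root of unity, and A the ring of integers of the Kummer field ℚ(ζ, p^(1/r)). Let y₁, y₂ be integers with gcd(y₁, y₂) = 1, p ∤ y₂, and r ∤ (y₂ - y₁). Then for any m ≠ n in {0, 1, ..., r-1}, the ideals (y₂ - ζ^m·y₁·p^(1/r))·A and (y₂ - ζ^n·y₁·p^(1/r))·A are coprime ideals of A. -/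
theorem aux15 {A : Type*} [CommRing A] (g : A →+* ℂ) (hginj : Function.Injective g)
    (p r : ℕ) (hp : p.Prime) (hr : r.Prime) (hmod : p % r = 1)
    (ζ : ℂ) (hζ : IsPrimitiveRoot ζ r)
    (α : ℂ) (hαr : α ^ r = (p : ℂ))
    (y₁ y₂ : ℤ) (hcop : IsCoprime y₁ y₂) (hpy : ¬ (p : ℤ) ∣ y₂)
    (hry : ¬ (r : ℤ) ∣ (y₂ - y₁))
    (m n : ℕ) (hm : m < r) (hn : n < r) (hmn : m ≠ n)
    (z w a b : A) (hgz : g z = ζ) (hgw : g w = α)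
    (hga : g a = (y₂ : ℂ) - ζ ^ m * (y₁ : ℂ) * α)
    (hgb : g b = (y₂ : ℂ) - ζ ^ n * (y₁ : ℂ) * α) :
    Ideal.span {a} + Ideal.span {b} = ⊤ := by
  have hr1 : 1 < r := hr.one_lt
  have hr0 : 0 < r := hr.pos
  have hζr : ζ ^ r = 1 := hζ.pow_eq_one
  have hpowmod : ∀ k : ℕ, ζ ^ k = ζ ^ (k % r) := by
    intro k
    conv_lhs => rw [← Nat.div_add_mod k r]
    rw [pow_add, pow_mul, hζr, one_pow, one_mul]
  set I := Ideal.span {a} + Ideal.span {b} with hI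
  have haI : a ∈ I := Ideal.mem_sup_left (Ideal.subset_span rfl)
  have hbI : b ∈ I := Ideal.mem_sup_right (Ideal.subset_span rfl)
  -- step 1 : δ = z^m - z^n ∈ I
  have hpZ : Prime ((p:ℕ) : ℤ) := Nat.prime_iff_prime_int.mp hp
  obtain ⟨x, u, hxu⟩ := (hpZ.coprime_iff_not_dvd.mpr hpy).mul_left hcop
  have hδI : (z^m - z^n) ∈ I := by
    have h1 : α^(r-1) * α = (p:ℂ) := by
      rw [← pow_succ, Nat.sub_add_cancel hr0]; exact hαr
    have h2 : (x:ℂ) * ((p:ℂ)*(y₁:ℂ)) + (u:ℂ)*(y₂:ℂ) = 1 := by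
      exact_mod_cast congrArg (Int.cast : ℤ → ℂ) hxu
    have he : (z^m - z^n) = (x : A) * w^(r-1) * (b - a)
        + (u : A) * (z^m*b - z^n*a) := by
      apply hginj
      simp only [map_add, map_mul, map_sub, map_pow, map_intCast, hgz, hgw, hga, hgb]
      linear_combination (-(x:ℂ) * (y₁:ℂ) * (ζ^m - ζ^n)) * h1 - (ζ^m - ζ^n) * h2
    rw [he]
    exact I.add_mem (I.mul_mem_left _ (I.sub_mem hbI haI))
      (I.mul_mem_left _ (I.sub_mem (I.mul_mem_left _ hbI) (I.mul_mem_left _ haI)))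
  -- step 2 : 1 - z^i ∈ I with i ≠ 0, i < r
  set i := (r - m + n) % r with hi
  have hiR : i < r := Nat.mod_lt _ hr0
  have hi0 : i ≠ 0 := by
    intro h0
    obtain ⟨c, hc⟩ := Nat.dvd_of_mod_eq_zero h0
    have hclt : c < 2 := by
      by_contra hh
      push_neg at hh
      have h2 := Nat.mul_le_mul_left r hh
      omega
    interval_cases c <;> omega
  have he1I : ((1 : A) - z^i) ∈ I := by
    have he1 : (1 : A) - z^i = z^(r-m) * (z^m - z^n) := by
      apply hginj
      simp only [map_sub, map_mul, map_pow, map_one, hgz]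
      rw [mul_sub, ← pow_add, ← pow_add, Nat.sub_add_cancel hm.le, hζr, hi, ← hpowmod]
    rw [he1]
    exact I.mul_mem_left _ hδI
  -- step 3 : 1 - z ∈ I
  obtain ⟨s, -, hs⟩ := Nat.exists_mul_mod_eq_one_of_coprime
    ((Nat.Prime.coprime_iff_not_dvd hr).mpr
      (fun hd => absurd (Nat.le_of_dvd (Nat.pos_of_ne_zero hi0) hd) (not_le.mpr hiR))).symm hr1
  have he2I : ((1 : A) - z) ∈ I := by
    have h3 : (ζ^i)^s = ζ := by rw [← pow_mul, hpowmod (i*s), hs, pow_one]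
    have he2 : (1 : A) - z = ((1 : A) - z^i) * ∑ t ∈ Finset.range s, (z^i)^t := by
      apply hginj
      simp only [map_sub, map_mul, map_sum, map_pow, map_one, hgz]
      linear_combination geom_sum_mul (ζ^i) s + h3
    rw [he2]
    exact I.mul_mem_right _ he1I
  -- step 4 : r ∈ I
  have hrI : ((r:ℕ) : A) ∈ I := by
    have her : ((r:ℕ) : A) = ((1 : A) - z) * ∑ k ∈ Finset.range r, ∑ t ∈ Finset.range k, z^t := by
      apply hginj
      simp only [map_natCast, map_mul, map_sub, map_one, map_sum, map_pow, hgz]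
      rw [Finset.mul_sum]
      rw [Finset.sum_congr rfl (fun k _ => by linear_combination -geom_sum_mul ζ k :
            ∀ k ∈ Finset.range r, (1-ζ) * ∑ t ∈ Finset.range k, ζ^t = 1 - ζ^k),
        Finset.sum_sub_distrib, Finset.sum_const, Finset.card_range,
        hζ.geom_sum_eq_zero hr1, sub_zero, nsmul_eq_mul, mul_one]
    rw [her]
    exact I.mul_mem_right _ he2I
  -- step 5 : c = y₂ - y₁ w ∈ I
  have hcI : ((y₂ : A) - (y₁ : A) * w) ∈ I := by
    have hec : (y₂ : A) - (y₁ : A) * w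
        = a - ((1 : A) - z) * ((∑ t ∈ Finset.range m, z^t) * ((y₁ : A) * w)) := by
      apply hginj
      simp only [map_sub, map_mul, map_sum, map_pow, map_one, map_intCast, hgz, hgw, hga]
      linear_combination (-(y₁:ℂ) * α) * geom_sum_mul ζ m
    rw [hec]
    exact I.sub_mem haI (I.mul_mem_right _ he2I)
  -- step 6 : N ∈ I
  set N : ℤ := y₂ ^ r - (p:ℤ) * y₁ ^ r with hN
  have hNA : ((N : ℤ) : A) = ∏ k ∈ Finset.range r, ((y₂ : A) - z^k * ((y₁ : A) * w)) := by
    apply hginj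
    simp only [map_intCast, map_prod, map_sub, map_mul, map_pow, hgz, hgw]
    have e : ((y₁:ℂ) * α)^r = (((y₁:ℂ))^r * (p:ℂ)) := by rw [mul_pow, hαr]
    have hpoly := congrArg (Polynomial.eval ((y₂ : ℂ))) (X_pow_sub_C_eq_prod hζ hr0 e)
    simp only [Polynomial.eval_sub, Polynomial.eval_pow, Polynomial.eval_X, Polynomial.eval_C,
      Polynomial.eval_prod, Polynomial.eval_mul] at hpoly
    rw [hN]
    push_cast
    linear_combination hpoly
  have hNI : ((N : ℤ) : A) ∈ I := by
    set c : A := (y₂ : A) - (y₁ : A) * w with hc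
    set J : Ideal A := Ideal.span {(1 : A) - z} with hJ
    have hJI : J ≤ I := by
      rw [hJ, Ideal.span_le, Set.singleton_subset_iff]; exact he2I
    have hq : Ideal.Quotient.mk J (((N : ℤ) : A)) = Ideal.Quotient.mk J (c^r) := by
      rw [hNA, map_prod]
      have hcongr : ∀ k ∈ Finset.range r,
          Ideal.Quotient.mk J ((y₂ : A) - z^k * ((y₁ : A) * w)) = Ideal.Quotient.mk J c := by
        intro k _
        rw [Ideal.Quotient.eq]
        have hE : (y₂ : A) - z^k * ((y₁ : A) * w) - c
            = ((1 : A) - z) * ((∑ t ∈ Finset.range k, z^t) * ((y₁ : A) * w)) := by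
          apply hginj
          simp only [map_sub, map_mul, map_sum, map_pow, map_one, map_intCast, hgz, hgw, hc]
          linear_combination ((y₁:ℂ) * α) * geom_sum_mul ζ k
        rw [hE]
        exact Ideal.mul_mem_right _ _ (Ideal.subset_span rfl)
      rw [Finset.prod_congr rfl hcongr, Finset.prod_const, Finset.card_range, map_pow]
    have hsub : ((N : ℤ) : A) - c^r ∈ J := Ideal.Quotient.eq.mp hq
    have : ((N : ℤ) : A) = (((N : ℤ) : A) - c^r) + c^r := by ring
    rw [this]
    exact I.add_mem (hJI hsub) (Ideal.pow_mem_of_mem I hcI r hr0)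
  -- step 7 : gcd(r, N) = 1 in ℤ
  have hNr : ¬ ((r:ℕ) : ℤ) ∣ N := by
    haveI : Fact r.Prime := ⟨hr⟩
    intro hdvd
    apply hry
    rw [← ZMod.intCast_zmod_eq_zero_iff_dvd] at hdvd ⊢
    have hp1 : ((p:ℕ) : ZMod r) = 1 := by rw [← ZMod.natCast_mod, hmod, Nat.cast_one]
    rw [hN] at hdvd
    push_cast at hdvd ⊢
    rw [ZMod.pow_card, ZMod.pow_card, hp1, one_mul] at hdvd
    exact hdvd
  obtain ⟨uu, vv, huv⟩ := ((Nat.prime_iff_prime_int.mp hr).coprime_iff_not_dvd).mpr hNr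
  -- finish
  rw [hI] at haI hbI hrI hNI ⊢
  rw [Ideal.eq_top_iff_one]
  have h1 : (1 : A) = (uu : A) * ((r:ℕ) : A) + (vv : A) * ((N : ℤ) : A) := by
    have := congrArg (fun t : ℤ => (t : A)) huv
    push_cast at this
    exact this.symm
  rw [h1]
  exact Ideal.add_mem _ (Ideal.mul_mem_left _ _ hrI) (Ideal.mul_mem_left _ _ hNI)

set_option maxHeartbeats 1000000 in
set_option synthInstance.maxHeartbeats 100000 in
theorem stmt_15 (p r : ℕ) (hp : p.Prime) (hr : r.Prime) (hpr : p ≠ r)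
    (hmod : p % r = 1)
    (ζ : ℂ) (hζ : IsPrimitiveRoot ζ r)
    (α : ℂ) (hα : α = ((p : ℝ) ^ ((1 : ℝ) / r) : ℝ))
    (K : IntermediateField ℚ ℂ) (hK : K = IntermediateField.adjoin ℚ {ζ, α})
    (y₁ y₂ : ℤ) (hcop : IsCoprime y₁ y₂) (hpy : ¬ (p : ℤ) ∣ y₂)
    (hry : ¬ (r : ℤ) ∣ (y₂ - y₁))
    (m n : ℕ) (hm : m < r) (hn : n < r) (hmn : m ≠ n)
    (a b : integralClosure ℤ K)
    (ha : ((a : K) : ℂ) = (y₂ : ℂ) - ζ ^ m * (y₁ : ℂ) * α)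
    (hb : ((b : K) : ℂ) = (y₂ : ℂ) - ζ ^ n * (y₁ : ℂ) * α) :
    Ideal.span {a} + Ideal.span {b} = ⊤ := by
  have hαr : α ^ r = (p : ℂ) := by
    have h : ((p : ℝ) ^ ((1 : ℝ) / r)) ^ (r : ℕ) = (p : ℝ) := by
      rw [← Real.rpow_natCast ((p:ℝ) ^ ((1:ℝ)/r)) r, ← Real.rpow_mul (by positivity),
        one_div_mul_cancel (Nat.cast_ne_zero.mpr hr.ne_zero), Real.rpow_one]
    rw [hα]; exact_mod_cast congrArg Complex.ofReal h
  have hζK : ζ ∈ K := by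
    rw [hK]; exact IntermediateField.subset_adjoin _ _ (by simp)
  have hαK : α ∈ K := by
    rw [hK]; exact IntermediateField.subset_adjoin _ _ (by simp)
  have hζint : IsIntegral ℤ ζ :=
    ⟨Polynomial.X ^ r - Polynomial.C 1, Polynomial.monic_X_pow_sub_C 1 hr.ne_zero, by
      simp [hζ.pow_eq_one]⟩
  have hαint : IsIntegral ℤ α :=
    ⟨Polynomial.X ^ r - Polynomial.C (p : ℤ), Polynomial.monic_X_pow_sub_C _ hr.ne_zero, by
      simp [hαr]⟩
  have hzint : IsIntegral ℤ (⟨ζ, hζK⟩ : K) :=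
    (isIntegral_algebraMap_iff (algebraMap K ℂ).injective).mp hζint
  have hwint : IsIntegral ℤ (⟨α, hαK⟩ : K) :=
    (isIntegral_algebraMap_iff (algebraMap K ℂ).injective).mp hαint
  let z : integralClosure ℤ K := ⟨⟨ζ, hζK⟩, hzint⟩
  let w : integralClosure ℤ K := ⟨⟨α, hαK⟩, hwint⟩
  let g : integralClosure ℤ K →+* ℂ :=
    (K.val.toRingHom).comp (Subalgebra.val (integralClosure ℤ K)).toRingHom
  have hginj : Function.Injective g := fun x y h => Subtype.ext (Subtype.ext h)
  exact aux15 g hginj p r hp hr hmod ζ hζ α hαr y₁ y₂ hcop hpy hry m n hm hn hmn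
    z w a b rfl rfl ha hb
end
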